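/- For every integer n ≥ 3 and every λ ∈ [0, 1/n], q_{n+1}(n,λ) − p_{n−1}(n,λ) ≥ [(n+1)(n−2)/(4n(n−1))]·(1 − 1/n)^n. -/

import Mathlib

/-- The output distribution p(n,λ) of the general attenuator with Fock environment |n⟩,
for ℓ = 0, …, n+1 (the case ℓ = n+1 is the continuous extension of the formula
… · λ^(n-ℓ) · …, which involves λ⁻¹, valid for all λ ∈ (0,1)). -/
noncomputable def pdist (n ℓ : ℕ) (t : ℝ) : ℝ :=
  if ℓ ≤ n then
    1 / (2 * ((n : ℝ) + 1) * (1 - t)) * ((n + 1).choose ℓ : ℝ) * (1 - t) ^ ℓ * t ^ (n - ℓ) *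
      ((1 - t) * ((n : ℝ) - (ℓ : ℝ) + 1) + (((n : ℝ) + 1) * (1 - t) - (ℓ : ℝ)) ^ 2)
  else ((n : ℝ) + 1) * t * (1 - t) ^ n / 2

/-- The output distribution q(n,λ) (spectrum of the joint output state). -/
noncomputable def qdist (n ℓ : ℕ) (t : ℝ) : ℝ :=
  if ℓ ≤ n then
    1 / (2 * ((n : ℝ) + 1) * (1 - t)) * ((n + 1).choose ℓ : ℝ) * (1 - t) ^ ℓ * t ^ (n - ℓ) *
      (t * (ℓ : ℝ) + (((n : ℝ) + 1) * (1 - t) - (ℓ : ℝ)) ^ 2)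
  else (1 - t) ^ n * (1 + ((n : ℝ) + 1) * t) / 2

/-
For `λ < 1` the difference `q_{n+1} - p_{n-1}` factors as `(1 - λ) ^ (n - 2) * f_n(λ)` with the
cubic `f_n = gapCubic n`. On `[0, 1/n]` it satisfies `(1 - λ) f_n' ≤ (n - 2) f_n`, so the derivative
of `(1 - λ) ^ (n - 2) f_n(λ)` is nonpositive there. Hence the difference is smallest at `λ = 1/n`,
where it equals the stated bound.
-/

open Set

noncomputable def gapCubic (N x : ℝ) : ℝ :=
  1 / 2 - (N + 1 / 2) * x + (N ^ 2 + N / 2 - 1 / 2) * x ^ 2 - (N + 2) * (N ^ 2 - 1) / 4 * x ^ 3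

noncomputable def gapCubicDeriv (N x : ℝ) : ℝ :=
  -(N + 1 / 2) + (2 * N ^ 2 + N - 1) * x - 3 * (N + 2) * (N ^ 2 - 1) / 4 * x ^ 2

theorem hasDerivAt_gapCubic (N x : ℝ) : HasDerivAt (gapCubic N) (gapCubicDeriv N x) x := by
  have h := ((((hasDerivAt_id x).const_mul (N + 1 / 2)).const_sub (1 / 2)).add
    ((hasDerivAt_pow 2 x).const_mul (N ^ 2 + N / 2 - 1 / 2))).sub
    ((hasDerivAt_pow 3 x).const_mul ((N + 2) * (N ^ 2 - 1) / 4))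
  refine h.congr_deriv ?_
  simp only [gapCubicDeriv]
  push_cast
  ring

theorem qdist_top_sub_pdist_eq {n : ℕ} (hn : 2 ≤ n) {t : ℝ} (ht : t ≠ 1) :
    qdist n (n + 1) t - pdist n (n - 1) t = (1 - t) ^ (n - 2) * gapCubic n t := by
  obtain ⟨k, rfl⟩ : ∃ k, n = k + 2 := ⟨n - 2, by omega⟩
  have hchoose : ((k + 2 + 1).choose (k + 1) : ℝ) = (k + 3) * (k + 2) / 2 := by
    rw [show k + 2 + 1 = k + 1 + 2 from rfl, Nat.choose_symm_add, Nat.cast_choose_two]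
    push_cast; ring
  have h1t : 1 - t ≠ 0 := sub_ne_zero.2 (Ne.symm ht)
  rw [show k + 2 - 1 = k + 1 from rfl, show k + 2 - 2 = k from rfl]
  unfold qdist pdist
  rw [if_neg (by omega), if_pos (by omega), show k + 2 - (k + 1) = 1 by omega, hchoose]
  simp only [gapCubic]
  field_simp
  push_cast
  ring

theorem one_sub_mul_gapCubicDeriv_le {N x : ℝ} (hN : 3 ≤ N) (hx : 0 ≤ x) (hNx : N * x ≤ 1) :
    (1 - x) * gapCubicDeriv N x ≤ (N - 2) * gapCubic N x := by
  obtain ⟨s, hs, rfl⟩ : ∃ s, 0 ≤ s ∧ N = s + 3 := ⟨N - 3, by linarith, by ring⟩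
  obtain ⟨u, hu, hxu⟩ : ∃ u, 0 ≤ u ∧ (s + 3) * x = u := ⟨_, by positivity, rfl⟩
  obtain ⟨v, hv, huv⟩ : ∃ v, 0 ≤ v ∧ 1 - u = v := ⟨_, by linarith, rfl⟩
  rw [← sub_nonneg]
  refine nonneg_of_mul_nonneg_right (a := 4 * (s + 3) ^ 3) ?_ (by positivity)
  -- expanded in powers of `s = N - 3` and in the Bernstein basis `u ^ j * v ^ (3 - j)` of
  -- `u = N x ∈ [0, 1]`, every coefficient is nonnegative
  have hcert : 4 * (s + 3) ^ 3 *
      ((s + 3 - 2) * gapCubic (s + 3) x - (1 - x) * gapCubicDeriv (s + 3) x) =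
      (432 * v ^ 3 + 324 * u * v ^ 2 + 72 * u ^ 2 * v + 20 * u ^ 3)
      + s * (594 * v ^ 3 + 468 * u * v ^ 2 + 90 * u ^ 2 * v + 24 * u ^ 3)
      + s ^ 2 * (306 * v ^ 3 + 258 * u * v ^ 2 + 43 * u ^ 2 * v + 9 * u ^ 3)
      + s ^ 3 * (70 * v ^ 3 + 64 * u * v ^ 2 + 10 * u ^ 2 * v + u ^ 3)
      + s ^ 4 * (6 * v ^ 3 + 6 * u * v ^ 2 + u ^ 2 * v) := by
    rw [← huv, ← hxu]
    simp only [gapCubic, gapCubicDeriv]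
    ring
  rw [hcert]
  positivity

theorem antitoneOn_one_sub_pow_succ_mul {f f' : ℝ → ℝ} {a b : ℝ} (k : ℕ) (hb : b ≤ 1)
    (hf : ∀ x, HasDerivAt f (f' x) x)
    (hff' : ∀ x ∈ Ioo a b, (1 - x) * f' x ≤ (k + 1) * f x) :
    AntitoneOn (fun x ↦ (1 - x) ^ (k + 1) * f x) (Icc a b) := by
  have hderiv (x : ℝ) : HasDerivAt (fun x ↦ (1 - x) ^ (k + 1) * f x)
      ((1 - x) ^ k * ((1 - x) * f' x - (k + 1) * f x)) x := by
    refine ((((hasDerivAt_id x).const_sub 1).pow (k + 1)).mul (hf x)).congr_deriv ?_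
    simp only [id, Pi.pow_apply, Nat.add_sub_cancel]
    push_cast
    ring
  refine antitoneOn_of_hasDerivWithinAt_nonpos (convex_Icc a b)
    (HasDerivAt.continuousOn fun x _ ↦ hderiv x) (fun x _ ↦ (hderiv x).hasDerivWithinAt) ?_
  rw [interior_Icc]
  intro x hx
  have hx1 : 0 ≤ 1 - x := by linarith [hx.2]
  exact mul_nonpos_of_nonneg_of_nonpos (by positivity) (by linarith [hff' x hx])

theorem one_sub_inv_pow_mul_gapCubic_inv {n : ℕ} (hn : 2 ≤ n) :
    (1 - 1 / (n : ℝ)) ^ (n - 2) * gapCubic n (1 / n) =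
      ((n : ℝ) + 1) * ((n : ℝ) - 2) / (4 * (n : ℝ) * ((n : ℝ) - 1)) *
        (1 - 1 / (n : ℝ)) ^ n := by
  obtain ⟨m, rfl⟩ : ∃ m, n = m + 2 := ⟨n - 2, by omega⟩
  have hm : (m : ℝ) + 2 - 1 ≠ 0 := by linarith [(m.cast_nonneg : (0 : ℝ) ≤ m)]
  rw [Nat.add_sub_cancel, pow_add]
  push_cast
  simp only [gapCubic]
  field_simp
  ring

theorem qdist_top_minus_pdist_lower_bound (n : ℕ) (hn : 3 ≤ n) (t : ℝ)
    (h0 : 0 ≤ t) (h2 : t ≤ 1 / (n : ℝ)) :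
    ((n : ℝ) + 1) * ((n : ℝ) - 2) / (4 * (n : ℝ) * ((n : ℝ) - 1)) * (1 - 1 / (n : ℝ)) ^ n
      ≤ qdist n (n + 1) t - pdist n (n - 1) t := by
  have hN : (3 : ℝ) ≤ n := by exact_mod_cast hn
  have hinv : 1 / (n : ℝ) < 1 := by rw [div_lt_one (by positivity)]; linarith
  obtain ⟨k, hk⟩ : ∃ k, n - 2 = k + 1 := ⟨n - 3, by omega⟩
  have hmono := antitoneOn_one_sub_pow_succ_mul k hinv.le (hasDerivAt_gapCubic n) fun x hx ↦ by
    have hkn : (k : ℝ) + 1 = n - 2 := by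
      rw [show n = k + 3 by omega]; push_cast; ring
    rw [hkn]
    refine one_sub_mul_gapCubicDeriv_le hN hx.1.le ?_
    rw [← le_div_iff₀' (by positivity)]
    exact hx.2.le
  rw [qdist_top_sub_pdist_eq (by omega) (by linarith),
    ← one_sub_inv_pow_mul_gapCubic_inv (by omega), hk]
  exact hmono ⟨h0, h2⟩ ⟨by positivity, le_rfl⟩ h2
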